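/- arXiv:alg-geom/9502024 — 4 statements merged into one kernel-verified Lean document; each statement's English description precedes it below -/
import Mathlib

section
/- Let A be a noetherian local ring with maximal ideal m, v : A → Â a flat local homomorphism of noetherian local rings with m̂ = m·Â, and set K = A/m, K̂ = Â/m̂. Then for every finitely generated A-module M, the canonical map K̂ ⊗_K gr_m(M) → gr_{m̂}(Â ⊗_A M) is an isomorphism of graded K̂-modules, where gr_m(M) = ⊕_{i≥0} mⁱM/mⁱ⁺¹M. -/
open scoped TensorProduct

open IsLocalRing

private lemma range_baseChange_smul_top (A B M : Type) [CommRing A] [CommRing B] [Algebra A B]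
    [AddCommGroup M] [Module A M] (I : Ideal A) :
    LinearMap.range ((Submodule.subtype (I • ⊤ : Submodule A M)).baseChange B) =
      (Ideal.map (algebraMap A B) I) • (⊤ : Submodule B (B ⊗[A] M)) := by
  apply le_antisymm
  · rintro _ ⟨z, rfl⟩
    induction z using TensorProduct.induction_on with
    | zero => simp
    | add x y hx hy => rw [map_add]; exact Submodule.add_mem _ hx hy
    | tmul b x =>
      obtain ⟨x, hx⟩ := x
      rw [LinearMap.baseChange_tmul]
      simp only [Submodule.coe_subtype]
      refine Submodule.smul_induction_on (p := fun m => b ⊗ₜ[A] m ∈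
          (Ideal.map (algebraMap A B) I) • (⊤ : Submodule B (B ⊗[A] M)))
        hx (fun r hr m _ => ?_) (fun m₁ m₂ h₁ h₂ => ?_)
      · show b ⊗ₜ[A] (r • m) ∈ _
        rw [TensorProduct.tmul_smul, ← algebraMap_smul B r]
        exact Submodule.smul_mem_smul (Ideal.mem_map_of_mem _ hr) trivial
      · show b ⊗ₜ[A] (m₁ + m₂) ∈ _
        rw [TensorProduct.tmul_add]
        exact Submodule.add_mem _ h₁ h₂
  · rw [Submodule.smul_le]
    rintro j hj z -
    revert z
    refine Submodule.span_induction
      (p := fun j _ => ∀ z : B ⊗[A] M, j • z ∈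
        LinearMap.range ((Submodule.subtype (I • ⊤ : Submodule A M)).baseChange B))
      ?_ ?_ ?_ ?_ hj
    · rintro _ ⟨a, ha, rfl⟩ z
      induction z using TensorProduct.induction_on with
      | zero => rw [smul_zero]; exact zero_mem _
      | add x y hx hy => rw [smul_add]; exact add_mem hx hy
      | tmul b m =>
        refine ⟨b ⊗ₜ ⟨a • m, Submodule.smul_mem_smul ha trivial⟩, ?_⟩
        rw [LinearMap.baseChange_tmul, algebraMap_smul]
        show b ⊗ₜ[A] (a • m) = a • b ⊗ₜ[A] m
        rw [TensorProduct.tmul_smul]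
    · intro z; rw [zero_smul]; exact zero_mem _
    · intro x y _ _ hx hy z; rw [add_smul]; exact add_mem (hx z) (hy z)
    · intro b x _ hx z
      rw [smul_eq_mul, mul_smul]
      exact Submodule.smul_mem _ b (hx z)

/-- Upgrade an `R`-linear equivalence between `S`-modules to an `S`-linear equivalence,
when `algebraMap R S` is surjective and the actions are compatible. -/
private def upgradeLinearEquiv {R S X Y : Type*} [CommRing R] [CommRing S] [Algebra R S]
    [AddCommGroup X] [AddCommGroup Y] [Module R X] [Module R Y] [Module S X] [Module S Y]
    (hsurj : Function.Surjective (algebraMap R S)) (e : X ≃ₗ[R] Y)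
    (hX : ∀ (r : R) (x : X), algebraMap R S r • x = r • x)
    (hY : ∀ (r : R) (y : Y), algebraMap R S r • y = r • y) : X ≃ₗ[S] Y where
  toFun := e
  invFun := e.symm
  left_inv := e.left_inv
  right_inv := e.right_inv
  map_add' := e.map_add
  map_smul' := by
    intro s x
    obtain ⟨r, rfl⟩ := hsurj s
    simp only [RingHom.id_apply]
    rw [hX, map_smul, hY]

@[simp] private lemma upgradeLinearEquiv_apply {R S X Y : Type*} [CommRing R] [CommRing S]
    [Algebra R S] [AddCommGroup X] [AddCommGroup Y] [Module R X] [Module R Y] [Module S X]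
    [Module S Y] (hsurj : Function.Surjective (algebraMap R S))
    (e : X ≃ₗ[R] Y)
    (hX : ∀ (r : R) (x : X), algebraMap R S r • x = r • x)
    (hY : ∀ (r : R) (y : Y), algebraMap R S r • y = r • y)
    (x : X) : upgradeLinearEquiv hsurj e hX hY x = e x := rfl

set_option maxHeartbeats 1000000 in
/-- associated graded base change.  Let `A` be a noetherian local ring
with maximal ideal `m`, `v : A → Â` a flat local homomorphism of noetherian local rings
with `m̂ = m·Â`, and `K = A/m`, `K̂ = Â/m̂`.  Then for every finitely generated `A`-module
`M` and every `i`, the canonical map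
`K̂ ⊗_K (mⁱM/mⁱ⁺¹M) → m̂ⁱM̂/m̂ⁱ⁺¹M̂`  (where `M̂ = Â ⊗_A M`)
is an isomorphism of `K̂`-modules; i.e. `K̂ ⊗_K gr_m M ≅ gr_{m̂}(Â ⊗_A M)` as graded
`K̂`-modules. -/
theorem stmt_7 (A B : Type) [CommRing A] [CommRing B]
    [IsNoetherianRing A] [IsNoetherianRing B] [IsLocalRing A] [IsLocalRing B]
    [Algebra A B] [Module.Flat A B] [IsLocalHom (algebraMap A B)]
    (hmax : maximalIdeal B = Ideal.map (algebraMap A B) (maximalIdeal A))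
    (M : Type) [AddCommGroup M] [Module A M] [Module.Finite A M] (i : ℕ) :
    letI : Algebra (A ⧸ maximalIdeal A) (B ⧸ maximalIdeal B) :=
      (Ideal.quotientMap (maximalIdeal B) (algebraMap A B)
        (hmax ▸ Ideal.le_comap_map)).toAlgebra
    ∃ f : ((B ⧸ maximalIdeal B) ⊗[A ⧸ maximalIdeal A]
            (↥(maximalIdeal A ^ i • ⊤ : Submodule A M) ⧸
              (maximalIdeal A • ⊤ :
                Submodule A ↥(maximalIdeal A ^ i • ⊤ : Submodule A M)))) →+
          (@HasQuotient.Quotient ↥(maximalIdeal B ^ i • ⊤ : Submodule B (B ⊗[A] M)) _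
            Submodule.hasQuotient
            (maximalIdeal B • ⊤ :
              Submodule B ↥(maximalIdeal B ^ i • ⊤ : Submodule B (B ⊗[A] M)))),
      -- `f` is `K̂`-linear:
      (∀ (c : B ⧸ maximalIdeal B) z, f (c • z) = c • f z) ∧
      -- `f` sends `c ⊗ [x]` to `c • [1 ⊗ x]`:
      (∀ (c : B ⧸ maximalIdeal B) (x : ↥(maximalIdeal A ^ i • ⊤ : Submodule A M))
          (h : ((1 : B) ⊗ₜ[A] (x : M)) ∈
            (maximalIdeal B ^ i • ⊤ : Submodule B (B ⊗[A] M))),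
        f (c ⊗ₜ (Submodule.Quotient.mk x)) =
          c • Submodule.Quotient.mk
            (⟨(1 : B) ⊗ₜ[A] (x : M), h⟩ :
              ↥(maximalIdeal B ^ i • ⊤ : Submodule B (B ⊗[A] M)))) ∧
      Function.Bijective f := by
  letI : Algebra (A ⧸ maximalIdeal A) (B ⧸ maximalIdeal B) :=
    (Ideal.quotientMap (maximalIdeal B) (algebraMap A B)
      (hmax ▸ Ideal.le_comap_map)).toAlgebra
  haveI : IsScalarTower A (A ⧸ maximalIdeal A) (B ⧸ maximalIdeal B) :=
    IsScalarTower.of_algebraMap_eq fun a => by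
      rw [Ideal.Quotient.algebraMap_eq, RingHom.algebraMap_toAlgebra, Ideal.quotientMap_mk]
      simp [Ideal.Quotient.mk_algebraMap]
  have hsurjA : Function.Surjective (algebraMap A (A ⧸ maximalIdeal A)) :=
    Ideal.Quotient.algebraMap_eq (maximalIdeal A) ▸ Ideal.Quotient.mk_surjective
  have hsurjB : Function.Surjective (algebraMap B (B ⧸ maximalIdeal B)) :=
    Ideal.Quotient.algebraMap_eq (maximalIdeal B) ▸ Ideal.Quotient.mk_surjective
  have hXA : ∀ (r : A) (x : (↥(maximalIdeal A ^ i • ⊤ : Submodule A M) ⧸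
      (maximalIdeal A • ⊤ : Submodule A ↥(maximalIdeal A ^ i • ⊤ : Submodule A M)))),
      algebraMap A (A ⧸ maximalIdeal A) r • x = r • x := by
    intro r x
    obtain ⟨y, rfl⟩ := Submodule.Quotient.mk_surjective _ x
    rw [Ideal.Quotient.algebraMap_eq]
    rfl
  have hXB : ∀ (r : B) (x : (@HasQuotient.Quotient ↥(maximalIdeal B ^ i • ⊤ : Submodule B (B ⊗[A] M)) _
      Submodule.hasQuotient
      (maximalIdeal B • ⊤ :
        Submodule B ↥(maximalIdeal B ^ i • ⊤ : Submodule B (B ⊗[A] M))))),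
      algebraMap B (B ⧸ maximalIdeal B) r • x = r • x := by
    intro r x
    obtain ⟨y, rfl⟩ := Submodule.Quotient.mk_surjective _ x
    rw [Ideal.Quotient.algebraMap_eq]
    rfl
  -- the flat base-change identification `B ⊗ N ≃ N'`
  let g : B ⊗[A] ↥(maximalIdeal A ^ i • ⊤ : Submodule A M) →ₗ[B] B ⊗[A] M :=
    ((maximalIdeal A ^ i • ⊤ : Submodule A M).subtype).baseChange B
  have hg_inj : Function.Injective g := by
    have h := Module.Flat.lTensor_preserves_injective_linearMap (M := B)
      (maximalIdeal A ^ i • ⊤ : Submodule A M).subtype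
      (maximalIdeal A ^ i • ⊤ : Submodule A M).injective_subtype
    rwa [← LinearMap.baseChange_eq_ltensor] at h
  have hrange : LinearMap.range g =
      (maximalIdeal B ^ i • ⊤ : Submodule B (B ⊗[A] M)) := by
    rw [hmax, ← Ideal.map_pow]
    exact range_baseChange_smul_top A B M (maximalIdeal A ^ i)
  let eflat : (B ⊗[A] ↥(maximalIdeal A ^ i • ⊤ : Submodule A M)) ≃ₗ[B]
      ↥(maximalIdeal B ^ i • ⊤ : Submodule B (B ⊗[A] M)) :=
    (LinearEquiv.ofInjective g hg_inj).trans (LinearEquiv.ofEq _ _ hrange)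
  -- the left-hand-side chain
  let eK : (↥(maximalIdeal A ^ i • ⊤ : Submodule A M) ⧸
        (maximalIdeal A • ⊤ : Submodule A ↥(maximalIdeal A ^ i • ⊤ : Submodule A M)))
      ≃ₗ[A ⧸ maximalIdeal A] ((A ⧸ maximalIdeal A) ⊗[A] ↥(maximalIdeal A ^ i • ⊤ : Submodule A M)) :=
    upgradeLinearEquiv
      (Y := (A ⧸ maximalIdeal A) ⊗[A] ↥(maximalIdeal A ^ i • ⊤ : Submodule A M)) hsurjA
      (TensorProduct.quotTensorEquivQuotSMul
        (↥(maximalIdeal A ^ i • ⊤ : Submodule A M)) (maximalIdeal A)).symm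
      hXA
      (fun r y => algebraMap_smul _ r y)
  let F := (eK.baseChange (A ⧸ maximalIdeal A) (B ⧸ maximalIdeal B) _ _).trans
      (TensorProduct.AlgebraTensorModule.cancelBaseChange A (A ⧸ maximalIdeal A)
        (B ⧸ maximalIdeal B) (B ⧸ maximalIdeal B) ↥(maximalIdeal A ^ i • ⊤ : Submodule A M))
  -- the right-hand-side chain
  let eKh : (@HasQuotient.Quotient ↥(maximalIdeal B ^ i • ⊤ : Submodule B (B ⊗[A] M)) _
        Submodule.hasQuotient
        (maximalIdeal B • ⊤ :
          Submodule B ↥(maximalIdeal B ^ i • ⊤ : Submodule B (B ⊗[A] M))))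
      ≃ₗ[B ⧸ maximalIdeal B]
      ((B ⧸ maximalIdeal B) ⊗[B] ↥(maximalIdeal B ^ i • ⊤ : Submodule B (B ⊗[A] M))) :=
    upgradeLinearEquiv
      (Y := (B ⧸ maximalIdeal B) ⊗[B] ↥(maximalIdeal B ^ i • ⊤ : Submodule B (B ⊗[A] M)))
      hsurjB
      (TensorProduct.quotTensorEquivQuotSMul
        (↥(maximalIdeal B ^ i • ⊤ : Submodule B (B ⊗[A] M))) (maximalIdeal B)).symm
      hXB
      (fun r y => algebraMap_smul _ r y)
  let G := (eKh.trans (eflat.symm.baseChange B (B ⧸ maximalIdeal B) _ _)).trans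
      (TensorProduct.AlgebraTensorModule.cancelBaseChange A B (B ⧸ maximalIdeal B)
        (B ⧸ maximalIdeal B) ↥(maximalIdeal A ^ i • ⊤ : Submodule A M))
  let flin := F.trans G.symm
  refine ⟨flin.toLinearMap.toAddMonoidHom, fun c z => map_smul flin c z, ?_, flin.bijective⟩
  intro c x h
  have hone : flin ((1 : B ⧸ maximalIdeal B) ⊗ₜ (Submodule.Quotient.mk x)) =
      Submodule.Quotient.mk (⟨(1 : B) ⊗ₜ[A] (x : M), h⟩ :
        ↥(maximalIdeal B ^ i • ⊤ : Submodule B (B ⊗[A] M))) := by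
    have hF : F ((1 : B ⧸ maximalIdeal B) ⊗ₜ (Submodule.Quotient.mk x)) =
        (1 : B ⧸ maximalIdeal B) ⊗ₜ[A] x := by
      show (TensorProduct.AlgebraTensorModule.cancelBaseChange A (A ⧸ maximalIdeal A)
          (B ⧸ maximalIdeal B) (B ⧸ maximalIdeal B) _)
        ((eK.baseChange (A ⧸ maximalIdeal A) (B ⧸ maximalIdeal B) _ _)
          ((1 : B ⧸ maximalIdeal B) ⊗ₜ (Submodule.Quotient.mk x))) = _
      rw [LinearEquiv.baseChange, TensorProduct.AlgebraTensorModule.congr_tmul]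
      simp only [LinearEquiv.refl_apply, upgradeLinearEquiv_apply, eK,
        TensorProduct.quotTensorEquivQuotSMul_symm_mk,
        TensorProduct.AlgebraTensorModule.cancelBaseChange_tmul, one_smul]
    have hG : G (Submodule.Quotient.mk (⟨(1 : B) ⊗ₜ[A] (x : M), h⟩ :
          ↥(maximalIdeal B ^ i • ⊤ : Submodule B (B ⊗[A] M)))) =
        (1 : B ⧸ maximalIdeal B) ⊗ₜ[A] x := by
      show (TensorProduct.AlgebraTensorModule.cancelBaseChange A B (B ⧸ maximalIdeal B)
          (B ⧸ maximalIdeal B) _)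
        ((eflat.symm.baseChange B (B ⧸ maximalIdeal B) _ _)
          (eKh (Submodule.Quotient.mk (⟨(1 : B) ⊗ₜ[A] (x : M), h⟩ :
            ↥(maximalIdeal B ^ i • ⊤ : Submodule B (B ⊗[A] M)))))) = _
      have h1 : eKh (Submodule.Quotient.mk (⟨(1 : B) ⊗ₜ[A] (x : M), h⟩ :
            ↥(maximalIdeal B ^ i • ⊤ : Submodule B (B ⊗[A] M)))) =
          (1 : B ⧸ maximalIdeal B) ⊗ₜ[B] (⟨(1 : B) ⊗ₜ[A] (x : M), h⟩ :
            ↥(maximalIdeal B ^ i • ⊤ : Submodule B (B ⊗[A] M))) := by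
        simp only [eKh, upgradeLinearEquiv_apply,
          TensorProduct.quotTensorEquivQuotSMul_symm_mk]
      have h2 : eflat.symm (⟨(1 : B) ⊗ₜ[A] (x : M), h⟩ :
            ↥(maximalIdeal B ^ i • ⊤ : Submodule B (B ⊗[A] M))) =
          (1 : B) ⊗ₜ[A] x := by
        rw [LinearEquiv.symm_apply_eq]
        apply Subtype.ext
        show g ((1 : B) ⊗ₜ[A] x) = (1 : B) ⊗ₜ[A] (x : M)
        rw [LinearMap.baseChange_tmul]; rfl
      rw [h1, LinearEquiv.baseChange, TensorProduct.AlgebraTensorModule.congr_tmul]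
      simp only [LinearEquiv.refl_apply, h2,
        TensorProduct.AlgebraTensorModule.cancelBaseChange_tmul, one_smul]
    show G.symm (F ((1 : B ⧸ maximalIdeal B) ⊗ₜ (Submodule.Quotient.mk x))) = _
    rw [hF, LinearEquiv.symm_apply_eq, hG]
  calc flin (c ⊗ₜ (Submodule.Quotient.mk x))
      = flin (c • ((1 : B ⧸ maximalIdeal B) ⊗ₜ (Submodule.Quotient.mk x))) := by
        rw [TensorProduct.smul_tmul', smul_eq_mul, mul_one]
    _ = c • flin ((1 : B ⧸ maximalIdeal B) ⊗ₜ (Submodule.Quotient.mk x)) := map_smul flin c _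
    _ = c • Submodule.Quotient.mk (⟨(1 : B) ⊗ₜ[A] (x : M), h⟩ :
          ↥(maximalIdeal B ^ i • ⊤ : Submodule B (B ⊗[A] M))) := by rw [hone]
end

section
/- Let k be a commutative ring and A a commutative k-algebra, and let Ω•_{A/k} be the exterior algebra of Kähler differentials with exterior derivative d. For every k-derivation ∂ : A → A there exists a unique degree-0 k-linear derivation L_∂ of the graded algebra Ω•_{A/k} (the Lie derivative) which extends ∂ on A and commutes with d; explicitly L_∂ = ι_∂ ∘ d + d ∘ ι_∂ where ι_∂ is the interior product (the degree −1 graded derivation extending ∂ viewed as a map Ω¹ → A). -/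
open ExteriorAlgebra

/-- The de Rham algebra `Ω•_{A/k}`: the exterior algebra over `A` of the module of
Kähler differentials. -/
abbrev DeRham (k A : Type) [CommRing k] [CommRing A] [Algebra k A] : Type :=
  ExteriorAlgebra A (KaehlerDifferential k A)

/-- The degree-`i` graded piece of the de Rham algebra. -/
noncomputable def deRhamGrade (k A : Type) [CommRing k] [CommRing A] [Algebra k A] (i : ℕ) :
    Submodule A (DeRham k A) :=
  LinearMap.range (ExteriorAlgebra.ι A (M := KaehlerDifferential k A)) ^ i

set_option maxHeartbeats 1000000

/-- the Lie derivative.  Let `A` be a commutative `k`-algebra and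
`Ω• = Ω•_{A/k}` its de Rham algebra, with exterior derivative `d` (a `k`-linear
degree `+1` graded derivation with `d² = 0` extending the universal derivation) and
interior product `ι_∂` (the `A`-linear degree `−1` graded derivation with
`ι_∂(da) = ∂(a)`).  For every `k`-derivation `∂ : A → A` there is a unique `k`-linear
degree-`0` derivation `L_∂` of `Ω•_{A/k}` which extends `∂` and commutes with `d`;
explicitly `L_∂ = ι_∂ ∘ d + d ∘ ι_∂`. -/
theorem stmt_8 (k A : Type) [CommRing k] [CommRing A] [Algebra k A]
    (δ : Derivation k A A)
    (d : DeRham k A →+ DeRham k A)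
    -- `d` is `k`-linear:
    (hdk : ∀ (c : k) (x : DeRham k A), d (algebraMap k A c • x) = algebraMap k A c • d x)
    -- `d` extends the universal derivation in degree `0`:
    (hd0 : ∀ a : A, d (algebraMap A (DeRham k A) a) =
      ExteriorAlgebra.ι A (KaehlerDifferential.D k A a))
    -- `d ∘ d = 0`:
    (hdd : ∀ x, d (d x) = 0)
    -- `d` has degree `+1`:
    (hddeg : ∀ i, ∀ x ∈ deRhamGrade k A i, d x ∈ deRhamGrade k A (i + 1))
    -- `d` is a graded derivation:
    (hdLeib : ∀ i, ∀ x ∈ deRhamGrade k A i, ∀ y,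
      d (x * y) = d x * y + ((-1 : ℤ) ^ i) • (x * d y))
    (iι : DeRham k A →+ DeRham k A)
    -- `ι_∂` is `A`-linear:
    (hiA : ∀ (a : A) x, iι (a • x) = a • iι x)
    -- `ι_∂` vanishes in degree `0`:
    (hi0 : ∀ a : A, iι (algebraMap A (DeRham k A) a) = 0)
    -- `ι_∂(da) = ∂(a)`:
    (hi1 : ∀ a : A, iι (ExteriorAlgebra.ι A (KaehlerDifferential.D k A a)) =
      algebraMap A (DeRham k A) (δ a))
    -- `ι_∂` has degree `−1`:
    (hideg : ∀ i, ∀ x ∈ deRhamGrade k A (i + 1), iι x ∈ deRhamGrade k A i)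
    -- `ι_∂` is a graded derivation:
    (hiLeib : ∀ i, ∀ x ∈ deRhamGrade k A i, ∀ y,
      iι (x * y) = iι x * y + ((-1 : ℤ) ^ i) • (x * iι y)) :
    -- the Lie derivative `L_∂ := ι_∂ ∘ d + d ∘ ι_∂` is the unique `k`-linear degree-0
    -- derivation extending `∂` and commuting with `d`:
    (∀ L : DeRham k A →+ DeRham k A,
      ((∀ (c : k) x, L (algebraMap k A c • x) = algebraMap k A c • L x) ∧
       (∀ i, ∀ x ∈ deRhamGrade k A i, L x ∈ deRhamGrade k A i) ∧
       (∀ x y, L (x * y) = L x * y + x * L y) ∧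
       (∀ a : A, L (algebraMap A (DeRham k A) a) = algebraMap A (DeRham k A) (δ a)) ∧
       (∀ x, L (d x) = d (L x)))
      ↔ L = iι.comp d + d.comp iι) := by
  intro L
  -- notation
  set M : DeRham k A →+ DeRham k A := iι.comp d + d.comp iι with hMdef
  have hM : ∀ x, M x = iι (d x) + d (iι x) := fun x => rfl
  -- basic grade facts
  have halg : ∀ a : A, algebraMap A (DeRham k A) a ∈ deRhamGrade k A 0 := by
    intro a
    rw [deRhamGrade, pow_zero]
    exact Submodule.mem_one.2 ⟨a, rfl⟩
  have hg0 : ∀ x ∈ deRhamGrade k A 0, ∃ a : A, algebraMap A (DeRham k A) a = x := by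
    intro x hx
    rw [deRhamGrade, pow_zero] at hx
    exact Submodule.mem_one.1 hx
  have hι1 : ∀ m : KaehlerDifferential k A, ExteriorAlgebra.ι A m ∈ deRhamGrade k A 1 := by
    intro m
    rw [deRhamGrade, pow_one]
    exact LinearMap.mem_range_self _ m
  -- M extends δ
  have hMalg : ∀ a : A, M (algebraMap A (DeRham k A) a) = algebraMap A (DeRham k A) (δ a) := by
    intro a
    rw [hM, hd0, hi1, hi0, map_zero, add_zero]
  -- M commutes with d
  have hMd : ∀ x, M (d x) = d (M x) := by
    intro x
    rw [hM, hM, hdd, map_zero, zero_add, map_add, hdd, add_zero]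
  -- iι vanishes on grade 0
  have hi0' : ∀ x ∈ deRhamGrade k A 0, iι x = 0 := by
    intro x hx
    obtain ⟨a, rfl⟩ := hg0 x hx
    exact hi0 a
  -- Leibniz for M on grade-0 elements
  have hMLeib0 : ∀ x ∈ deRhamGrade k A 0, ∀ y, M (x * y) = M x * y + x * M y := by
    intro x hx y
    have hx1 : d x ∈ deRhamGrade k A 1 := hddeg 0 x hx
    have hz : iι x = 0 := hi0' x hx
    have e1 : d (x * y) = d x * y + x * d y := by
      rw [hdLeib 0 x hx y, pow_zero, one_smul]
    have e2 : iι (d x * y) = iι (d x) * y - d x * iι y := by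
      rw [hiLeib 1 (d x) hx1 y, pow_one, neg_one_zsmul, ← sub_eq_add_neg]
    have e3 : iι (x * d y) = x * iι (d y) := by
      rw [hiLeib 0 x hx (d y), pow_zero, one_smul, hz, zero_mul, zero_add]
    have e4 : iι (x * y) = x * iι y := by
      rw [hiLeib 0 x hx y, pow_zero, one_smul, hz, zero_mul, zero_add]
    have e5 : d (x * iι y) = d x * iι y + x * d (iι y) := by
      rw [hdLeib 0 x hx (iι y), pow_zero, one_smul]
    rw [hM, hM, hM, e1, map_add, e2, e3, e4, e5, hz, map_zero, add_zero, mul_add]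
    abel
  -- Leibniz for M on grade-1 elements
  have hMLeib1 : ∀ x ∈ deRhamGrade k A 1, ∀ y, M (x * y) = M x * y + x * M y := by
    intro x hx y
    have hx2 : d x ∈ deRhamGrade k A 2 := hddeg 1 x hx
    have hx0 : iι x ∈ deRhamGrade k A 0 := hideg 0 x hx
    have e1 : d (x * y) = d x * y - x * d y := by
      rw [hdLeib 1 x hx y, pow_one, neg_one_zsmul, ← sub_eq_add_neg]
    have e2 : iι (d x * y) = iι (d x) * y + d x * iι y := by
      rw [hiLeib 2 (d x) hx2 y]
      norm_num
    have e3 : iι (x * d y) = iι x * d y - x * iι (d y) := by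
      rw [hiLeib 1 x hx (d y), pow_one, neg_one_zsmul, ← sub_eq_add_neg]
    have e4 : iι (x * y) = iι x * y - x * iι y := by
      rw [hiLeib 1 x hx y, pow_one, neg_one_zsmul, ← sub_eq_add_neg]
    have e5 : d (iι x * y) = d (iι x) * y + iι x * d y := by
      rw [hdLeib 0 (iι x) hx0 y, pow_zero, one_smul]
    have e6 : d (x * iι y) = d x * iι y - x * d (iι y) := by
      rw [hdLeib 1 x hx (iι y), pow_one, neg_one_zsmul, ← sub_eq_add_neg]
    rw [hM, hM, hM, e1, map_sub, e2, e3, e4, map_sub, e5, e6, add_mul, mul_add]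
    abel
  -- Leibniz for M in general, by induction
  have hMLeib : ∀ x y, M (x * y) = M x * y + x * M y := by
    intro x
    induction x using ExteriorAlgebra.induction with
    | algebraMap a => exact hMLeib0 _ (halg a)
    | ι m => exact hMLeib1 _ (hι1 m)
    | mul a b ha hb =>
      intro y
      rw [mul_assoc, ha, hb, ha b, add_mul]
      simp only [mul_add, mul_assoc]
      abel
    | add a b ha hb =>
      intro y
      rw [add_mul, map_add, map_add, ha, hb, add_mul, add_mul]
      abel
  constructor
  · -- uniqueness
    rintro ⟨-, -, hLeib, hLalg, hLd⟩
    ext x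
    show L x = M x
    induction x using ExteriorAlgebra.induction with
    | algebraMap a => rw [hLalg, hMalg]
    | ι m =>
      have hsp : m ∈ Submodule.span A (Set.range (KaehlerDifferential.D k A)) := by
        rw [KaehlerDifferential.span_range_derivation]; trivial
      induction hsp using Submodule.span_induction with
      | mem v hv =>
        obtain ⟨a, rfl⟩ := hv
        rw [← hd0, hLd, hMd, hLalg, hMalg]
      | zero => rw [map_zero, map_zero, map_zero]
      | add u v _ _ hu hv => rw [map_add, map_add, map_add, hu, hv]
      | smul a v _ hv =>
        rw [map_smul, Algebra.smul_def, hLeib, hMLeib, hLalg, hMalg, hv]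
    | mul a b ha hb => rw [hLeib, hMLeib, ha, hb]
    | add a b ha hb => rw [map_add, map_add, ha, hb]
  · -- the Lie derivative has all the properties
    rintro rfl
    refine ⟨?_, ?_, hMLeib, hMalg, hMd⟩
    · intro c x
      rw [hM, hM, hdk, hiA, hiA, hdk, smul_add]
    · intro i x hx
      rcases i with _ | j
      · obtain ⟨a, rfl⟩ := hg0 x hx
        rw [hM, hi0, map_zero, add_zero]
        exact hideg 0 _ (hddeg 0 _ (halg a))
      · rw [hM]
        exact Submodule.add_mem _ (hideg (j + 1) _ (hddeg (j + 1) x hx))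
          (hddeg j _ (hideg j x hx))
end

section
/- Let A be a commutative k-algebra such that Ω^{n+1}_{A/k} = 0. Then for every a ∈ A, every α ∈ Ω^n_{A/k}, and every k-derivation ∂ of A, one has L_{a∂}(α) = L_∂(aα), where L denotes the Lie derivative L_∂ = ι_∂ d + d ι_∂ on the de Rham algebra Ω•_{A/k}. -/
open ExteriorAlgebra

/-- Let `A` be a commutative `k`-algebra with `Ω^{n+1}_{A/k} = 0`.
Then for every `a ∈ A`, every `α ∈ Ω^n_{A/k}` and every `k`-derivation `∂` of `A`,
`L_{a∂}(α) = L_∂(aα)`, where `L_∂ = ι_∂ ∘ d + d ∘ ι_∂` is the Lie derivative on the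
de Rham algebra. -/
theorem stmt_10 (k A : Type) [CommRing k] [CommRing A] [Algebra k A] (n : ℕ)
    (htop : deRhamGrade k A (n + 1) = ⊥)
    (d : DeRham k A →+ DeRham k A)
    (hdk : ∀ (c : k) (x : DeRham k A), d (algebraMap k A c • x) = algebraMap k A c • d x)
    (hd0 : ∀ a : A, d (algebraMap A (DeRham k A) a) =
      ExteriorAlgebra.ι A (KaehlerDifferential.D k A a))
    (hdd : ∀ x, d (d x) = 0)
    (hddeg : ∀ i, ∀ x ∈ deRhamGrade k A i, d x ∈ deRhamGrade k A (i + 1))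
    (hdLeib : ∀ i, ∀ x ∈ deRhamGrade k A i, ∀ y,
      d (x * y) = d x * y + ((-1 : ℤ) ^ i) • (x * d y))
    (iι : Derivation k A A → (DeRham k A →+ DeRham k A))
    (hiA : ∀ (δ : Derivation k A A) (a : A) x, iι δ (a • x) = a • iι δ x)
    (hi0 : ∀ (δ : Derivation k A A) (a : A), iι δ (algebraMap A (DeRham k A) a) = 0)
    (hi1 : ∀ (δ : Derivation k A A) (a : A),
      iι δ (ExteriorAlgebra.ι A (KaehlerDifferential.D k A a)) =
        algebraMap A (DeRham k A) (δ a))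
    (hideg : ∀ (δ : Derivation k A A) i, ∀ x ∈ deRhamGrade k A (i + 1),
      iι δ x ∈ deRhamGrade k A i)
    (hiLeib : ∀ (δ : Derivation k A A) i, ∀ x ∈ deRhamGrade k A i, ∀ y,
      iι δ (x * y) = iι δ x * y + ((-1 : ℤ) ^ i) • (x * iι δ y))
    -- the interior product is `A`-linear in the derivation:
    (hiSMul : ∀ (a : A) (δ : Derivation k A A) (x : DeRham k A),
      iι (a • δ) x = a • iι δ x) :
    ∀ (a : A) (δ : Derivation k A A), ∀ α ∈ deRhamGrade k A n,
      iι (a • δ) (d α) + d (iι (a • δ) α)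
        = iι δ (d (a • α)) + d (iι δ (a • α)) := by
  intro a δ α hα
  -- `dα` lies in degree `n+1`, hence vanishes
  have hdα : d α = 0 := by
    have h := hddeg n α hα
    rw [htop] at h
    simpa using h
  -- `a • α = (algebraMap A _) a * α`
  have hsm : a • α = algebraMap A (DeRham k A) a * α := Algebra.smul_def a α
  have hmem0 : algebraMap A (DeRham k A) a ∈ deRhamGrade k A 0 := by
    rw [deRhamGrade, pow_zero]
    exact ⟨a, by simp [Algebra.algebraMap_eq_smul_one]⟩
  -- ι(Da) * α lies in degree n+1, hence vanishes
  have hι1 : (ExteriorAlgebra.ι A (KaehlerDifferential.D k A a) : DeRham k A)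
      ∈ deRhamGrade k A 1 := by
    rw [deRhamGrade, pow_one]
    exact ⟨_, rfl⟩
  have hprod : (ExteriorAlgebra.ι A (KaehlerDifferential.D k A a) : DeRham k A) * α
      ∈ deRhamGrade k A (n + 1) := by
    rw [deRhamGrade, pow_succ']
    exact Submodule.mul_mem_mul ⟨_, rfl⟩
      hα
  have hprod0 : (ExteriorAlgebra.ι A (KaehlerDifferential.D k A a) : DeRham k A) * α = 0 := by
    rw [htop] at hprod
    simpa using hprod
  -- compute d (a • α)
  have hdaα : d (a • α) = 0 := by
    rw [hsm, hdLeib 0 _ hmem0 α, hd0, hdα, hprod0]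
    simp
  rw [hdα, hdaα, (iι (a • δ)).map_zero, (iι δ).map_zero, hiSMul, hiA]
end

section
/- Let k be a field of characteristic 0, A = k[[t]], E = Hom^cont_k(A, k) ≅ k[t⁻¹] the Matlis dual module (an injective hull of k = A/m). Then for every k-linear continuous differential operator D : A → A there is a unique continuous differential operator D^∨ : E → E adjoint to D with respect to the pairing ⟨a, φ⟩ = φ(a), i.e., ⟨D(a), φ⟩ = ⟨a, D^∨(φ)⟩, and D ↦ D^∨ is an anti-isomorphism of filtered k-algebras D(A)° ≅ Diff^cont_{A/k}(E, E). Concretely, t^∨ is multiplication by t on k[t⁻¹] (with t·t⁻ⁿ = t⁻ⁿ⁺¹, t·1 = 0) and (d/dt)^∨ acts appropriately as a differential operator on k[t⁻¹]. -/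
open PowerSeries

/-- Differential operators of order `≤ n` on `k[[t]]`, via commutators. -/
def IsDiffOpA (k : Type) [Field k] : ℕ → (PowerSeries k → PowerSeries k) → Prop
  | 0, D => ∀ a x : PowerSeries k, D (a * x) = a * D x
  | n + 1, D => ∀ a : PowerSeries k, IsDiffOpA k n (fun x => D (a * x) - a * D x)

/-- Continuity of an operator on `k[[t]]` for the `t`-adic topology. -/
def ContOpA (k : Type) [Field k] (D : PowerSeries k → PowerSeries k) : Prop :=
  ∀ n : ℕ, ∃ m : ℕ, ∀ f : PowerSeries k,
    (∀ i : ℕ, i < m → coeff i f = 0) → ∀ i : ℕ, i < n → coeff i (D f) = 0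

/-- The action of `A = k[[t]]` on the Matlis dual module `E = k[t⁻¹]` (modelled as
`Polynomial k`): `t` acts by `divX` (i.e. `t·t⁻ⁿ = t⁻ⁿ⁺¹`, `t·1 = 0`), and a power
series acts by the corresponding finite sum. -/
noncomputable def actE (k : Type) [Field k] (f : PowerSeries k) (g : Polynomial k) :
    Polynomial k :=
  ∑ i ∈ Finset.range (g.natDegree + 1), coeff i f • (Polynomial.divX^[i] g)

/-- Differential operators of order `≤ n` on `E = k[t⁻¹]` over `A = k[[t]]`,
via commutators with the `A`-action `actE`. -/
def IsDiffOpE (k : Type) [Field k] : ℕ → (Polynomial k → Polynomial k) → Prop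
  | 0, D => ∀ (f : PowerSeries k) (g : Polynomial k), D (actE k f g) = actE k f (D g)
  | n + 1, D => ∀ f : PowerSeries k,
      IsDiffOpE k n (fun g => D (actE k f g) - actE k f (D g))

/-- The residue-type perfect pairing `⟨f, g⟩` between `A = k[[t]]` and `E = k[t⁻¹]`
(with `⟨tᵐ, t⁻ⁿ⟩ = δ_{m,n}`). -/
noncomputable def pairAE (k : Type) [Field k] (f : PowerSeries k) (g : Polynomial k) :
    k :=
  g.sum fun n c => c * coeff n f

namespace Stmt18Aux

variable {k : Type} [Field k]

lemma pair_def (f : PowerSeries k) (g : Polynomial k) :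
    pairAE k f g = ∑ n ∈ g.support, g.coeff n * coeff n f := rfl

lemma pair_eq_range (f : PowerSeries k) (g : Polynomial k) {N : ℕ} (h : g.natDegree < N) :
    pairAE k f g = ∑ n ∈ Finset.range N, g.coeff n * coeff n f :=
  Polynomial.sum_over_range' g (f := fun n c => c * coeff n f) (fun n => zero_mul _) N h

lemma pair_eq_range' (f : PowerSeries k) (g : Polynomial k) {N : ℕ}
    (h : ∀ n, N ≤ n → g.coeff n = 0) :
    pairAE k f g = ∑ n ∈ Finset.range N, g.coeff n * coeff n f := by
  rw [pair_def]
  apply Finset.sum_subset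
  · intro n hn
    simp only [Polynomial.mem_support_iff] at hn
    simp only [Finset.mem_range]
    by_contra hc
    exact hn (h n (le_of_not_gt hc))
  · intro n _ hn
    simp only [Polynomial.mem_support_iff, not_not] at hn
    rw [hn, zero_mul]

lemma pair_add_left (f₁ f₂ : PowerSeries k) (g : Polynomial k) :
    pairAE k (f₁ + f₂) g = pairAE k f₁ g + pairAE k f₂ g := by
  simp only [pair_def, map_add, mul_add, Finset.sum_add_distrib]

lemma pair_smul_left (c : k) (f : PowerSeries k) (g : Polynomial k) :
    pairAE k (c • f) g = c * pairAE k f g := by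
  simp only [pair_def, map_smul, smul_eq_mul, Finset.mul_sum]
  exact Finset.sum_congr rfl fun n _ => by ring

lemma pair_neg_left (f : PowerSeries k) (g : Polynomial k) :
    pairAE k (-f) g = -pairAE k f g := by
  simp only [pair_def, map_neg, mul_neg, Finset.sum_neg_distrib]

lemma pair_sub_left (f₁ f₂ : PowerSeries k) (g : Polynomial k) :
    pairAE k (f₁ - f₂) g = pairAE k f₁ g - pairAE k f₂ g := by
  rw [sub_eq_add_neg, pair_add_left, pair_neg_left, sub_eq_add_neg]

lemma pair_add_right (f : PowerSeries k) (g₁ g₂ : Polynomial k) :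
    pairAE k f (g₁ + g₂) = pairAE k f g₁ + pairAE k f g₂ := by
  unfold pairAE
  exact Polynomial.sum_add_index g₁ g₂ _ (fun i => zero_mul _) (fun a b₁ b₂ => add_mul _ _ _)

lemma pair_smul_right (f : PowerSeries k) (c : k) (g : Polynomial k) :
    pairAE k f (c • g) = c * pairAE k f g := by
  rw [pair_eq_range f (c • g)
      (lt_of_le_of_lt (Polynomial.natDegree_smul_le c g) (Nat.lt_succ_self _)),
    pair_eq_range f g (Nat.lt_succ_self _), Finset.mul_sum]
  exact Finset.sum_congr rfl fun n _ => by rw [Polynomial.coeff_smul, smul_eq_mul]; ring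

lemma pair_neg_right (f : PowerSeries k) (g : Polynomial k) :
    pairAE k f (-g) = -pairAE k f g := by
  have := pair_smul_right f (-1 : k) g
  rw [neg_one_smul] at this
  rw [this]; ring

lemma pair_sub_right (f : PowerSeries k) (g₁ g₂ : Polynomial k) :
    pairAE k f (g₁ - g₂) = pairAE k f g₁ - pairAE k f g₂ := by
  rw [sub_eq_add_neg, pair_add_right, pair_neg_right, sub_eq_add_neg]

lemma pair_Xpow_left (n : ℕ) (g : Polynomial k) :
    pairAE k ((X : PowerSeries k) ^ n) g = g.coeff n := by
  rw [pair_def]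
  rw [Finset.sum_congr rfl (fun m _ => by
    rw [coeff_X_pow]
    split_ifs with h
    · rw [mul_one]; subst h; rfl
    · rw [mul_zero]
    : ∀ m ∈ g.support, g.coeff m * coeff m ((X:PowerSeries k)^n)
        = if m = n then g.coeff n else 0)]
  rw [Finset.sum_ite_eq' g.support n (fun _ => g.coeff n)]
  split_ifs with h
  · rfl
  · exact (Polynomial.notMem_support_iff.mp h).symm

lemma pair_monomial_right (f : PowerSeries k) (n : ℕ) (c : k) :
    pairAE k f (Polynomial.monomial n c) = c * coeff n f :=
  Polynomial.sum_monomial_index c _ (zero_mul _)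

lemma pair_Xpow_right (f : PowerSeries k) (n : ℕ) :
    pairAE k f (Polynomial.X ^ n) = coeff n f := by
  rw [Polynomial.X_pow_eq_monomial, pair_monomial_right, one_mul]

lemma right_ext {g₁ g₂ : Polynomial k} (h : ∀ f, pairAE k f g₁ = pairAE k f g₂) :
    g₁ = g₂ :=
  Polynomial.ext fun n => by
    rw [← pair_Xpow_left n g₁, ← pair_Xpow_left n g₂, h]

lemma left_ext {f₁ f₂ : PowerSeries k} (h : ∀ g, pairAE k f₁ g = pairAE k f₂ g) :
    f₁ = f₂ :=
  PowerSeries.ext fun n => by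
    have := h (Polynomial.X ^ n)
    rwa [pair_Xpow_right, pair_Xpow_right] at this

lemma coeff_divX_iterate (g : Polynomial k) (i m : ℕ) :
    (Polynomial.divX^[i] g).coeff m = g.coeff (m + i) := by
  induction i generalizing m with
  | zero => rfl
  | succ i ih =>
    rw [Function.iterate_succ_apply', Polynomial.coeff_divX, ih]
    congr 1
    omega

lemma coeff_actE (a : PowerSeries k) (g : Polynomial k) {N : ℕ} (hN : g.natDegree < N)
    (m : ℕ) :
    (actE k a g).coeff m = ∑ i ∈ Finset.range N, coeff i a * g.coeff (m + i) := by
  unfold actE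
  rw [Polynomial.finset_sum_coeff]
  simp only [Polynomial.coeff_smul, smul_eq_mul, coeff_divX_iterate]
  apply Finset.sum_subset
  · exact Finset.range_subset_range.mpr hN
  · intro i _ hi
    simp only [Finset.mem_range, not_lt] at hi
    rw [Polynomial.coeff_eq_zero_of_natDegree_lt (by omega), mul_zero]

lemma actE_coeff_zero (a : PowerSeries k) (g : Polynomial k) {m : ℕ}
    (hm : g.natDegree < m) : (actE k a g).coeff m = 0 := by
  rw [coeff_actE a g (Nat.lt_succ_self _) m]
  exact Finset.sum_eq_zero fun i _ => by
    rw [Polynomial.coeff_eq_zero_of_natDegree_lt (by omega), mul_zero]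

lemma actE_add (a : PowerSeries k) (g h : Polynomial k) :
    actE k a (g + h) = actE k a g + actE k a h := by
  ext m
  have h1 : (g + h).natDegree < max g.natDegree h.natDegree + 1 :=
    lt_of_le_of_lt (Polynomial.natDegree_add_le g h) (Nat.lt_succ_self _)
  have h2 : g.natDegree < max g.natDegree h.natDegree + 1 := by omega
  have h3 : h.natDegree < max g.natDegree h.natDegree + 1 := by omega
  rw [Polynomial.coeff_add, coeff_actE a _ h1 m, coeff_actE a g h2 m, coeff_actE a h h3 m,
    ← Finset.sum_add_distrib]
  exact Finset.sum_congr rfl fun i _ => by rw [Polynomial.coeff_add, mul_add]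

lemma actE_smul (a : PowerSeries k) (c : k) (g : Polynomial k) :
    actE k a (c • g) = c • actE k a g := by
  ext m
  rw [Polynomial.coeff_smul,
    coeff_actE a _ (lt_of_le_of_lt (Polynomial.natDegree_smul_le c g) (Nat.lt_succ_self _)) m,
    coeff_actE a g (Nat.lt_succ_self _) m, Finset.smul_sum]
  exact Finset.sum_congr rfl fun i _ => by
    rw [Polynomial.coeff_smul, smul_eq_mul, smul_eq_mul]; ring

lemma actE_neg (a : PowerSeries k) (g : Polynomial k) :
    actE k a (-g) = -actE k a g := by
  have := actE_smul a (-1 : k) g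
  rwa [neg_one_smul, neg_one_smul] at this

lemma pair_mul (a f : PowerSeries k) (g : Polynomial k) :
    pairAE k (a * f) g = pairAE k f (actE k a g) := by
  induction g using Polynomial.induction_on' with
  | add p q hp hq => rw [pair_add_right, actE_add, pair_add_right, hp, hq]
  | monomial n c =>
    have hnd : (Polynomial.monomial n c).natDegree < n + 1 :=
      lt_of_le_of_lt (Polynomial.natDegree_monomial_le c) (Nat.lt_succ_self _)
    rw [pair_monomial_right, PowerSeries.coeff_mul,
      Finset.Nat.sum_antidiagonal_eq_sum_range_succ_mk,
      pair_eq_range' f (actE k a (Polynomial.monomial n c))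
        (N := n + 1) (fun m hm => actE_coeff_zero a _ (by omega))]
    have hco : ∀ m ∈ Finset.range (n + 1),
        (actE k a (Polynomial.monomial n c)).coeff m * coeff m f
          = c * (coeff (n - m) a * coeff (n - (n - m)) f) := by
      intro m hm
      simp only [Finset.mem_range] at hm
      rw [coeff_actE a _ hnd m]
      rw [Finset.sum_congr rfl (fun i _ => by
        rw [Polynomial.coeff_monomial]
        split_ifs with h1 h2 h3
        · rfl
        · exact absurd (by omega : i = n - m) h2
        · exact absurd (by omega : n = m + i) h1
        · exact mul_zero _
        : ∀ i ∈ Finset.range (n + 1), coeff i a * (Polynomial.monomial n c).coeff (m + i)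
            = if i = n - m then coeff i a * c else 0)]
      rw [Finset.sum_ite_eq' (Finset.range (n + 1)) (n - m) (fun i => coeff i a * c),
        if_pos (Finset.mem_range.mpr (by omega))]
      rw [Nat.sub_sub_self (by omega : m ≤ n)]
      ring
    rw [Finset.sum_congr rfl hco, ← Finset.mul_sum]
    congr 1
    exact (Finset.sum_range_reflect (fun i => coeff i a * coeff (n - i) f) (n + 1)).symm

lemma actE_X (g : Polynomial k) : actE k (X : PowerSeries k) g = g.divX := by
  ext m
  rw [Polynomial.coeff_divX, coeff_actE _ g (Nat.lt_succ_self _) m]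
  rw [Finset.sum_congr rfl (fun i _ => by
    rw [PowerSeries.coeff_X]
    split_ifs with h
    · subst h; rw [one_mul]
    · rw [zero_mul]
    : ∀ i ∈ Finset.range (g.natDegree + 1),
        coeff i (X : PowerSeries k) * g.coeff (m + i)
          = if i = 1 then g.coeff (m + 1) else 0)]
  rw [Finset.sum_ite_eq' (Finset.range (g.natDegree + 1)) 1 (fun _ => g.coeff (m + 1))]
  split_ifs with h
  · rfl
  · simp only [Finset.mem_range, not_lt] at h
    exact (Polynomial.coeff_eq_zero_of_natDegree_lt (by omega)).symm

lemma isDiffOpA_neg (n : ℕ) :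
    ∀ D : PowerSeries k → PowerSeries k, IsDiffOpA k n D → IsDiffOpA k n (fun x => -(D x)) := by
  induction n with
  | zero =>
    intro D h a x
    show -(D (a * x)) = a * -(D x)
    rw [h a x]; ring
  | succ n ih =>
    intro D h a
    have heq : (fun x => (fun x => -(D x)) (a * x) - a * (fun x => -(D x)) x)
        = fun x => -((fun x => D (a * x) - a * D x) x) := by
      funext x; simp only; ring
    rw [heq]
    exact ih _ (h a)

lemma isDiffOpE_neg (n : ℕ) :
    ∀ E : Polynomial k → Polynomial k, IsDiffOpE k n E → IsDiffOpE k n (fun g => -(E g)) := by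
  induction n with
  | zero =>
    intro E h a g
    show -(E (actE k a g)) = actE k a (-(E g))
    rw [h a g, actE_neg]
  | succ n ih =>
    intro E h a
    have heq : (fun g => (fun g => -(E g)) (actE k a g) - actE k a ((fun g => -(E g)) g))
        = fun g => -((fun g => E (actE k a g) - actE k a (E g)) g) := by
      funext g; simp only [actE_neg]; ring
    rw [heq]
    exact ih _ (h a)

lemma adj_AtoE (n : ℕ) :
    ∀ (D : PowerSeries k → PowerSeries k) (E : Polynomial k → Polynomial k),
      (∀ f g, pairAE k (D f) g = pairAE k f (E g)) →
      IsDiffOpA k n D → IsDiffOpE k n E := by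
  induction n with
  | zero =>
    intro D E hadj hD a g
    apply right_ext
    intro f
    calc pairAE k f (E (actE k a g)) = pairAE k (D f) (actE k a g) := (hadj f _).symm
      _ = pairAE k (a * D f) g := (pair_mul a (D f) g).symm
      _ = pairAE k (D (a * f)) g := by rw [hD a f]
      _ = pairAE k (a * f) (E g) := hadj _ _
      _ = pairAE k f (actE k a (E g)) := pair_mul a f (E g)
  | succ n ih =>
    intro D E hadj hD a
    have hadj' : ∀ f g, pairAE k ((fun x => D (a * x) - a * D x) f) g
        = pairAE k f ((fun g => actE k a (E g) - E (actE k a g)) g) := by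
      intro f g
      simp only
      rw [pair_sub_left, pair_sub_right, hadj, pair_mul a f (E g), pair_mul a (D f) g, hadj]
    have h1 := ih _ _ hadj' (hD a)
    have h2 := isDiffOpE_neg n _ h1
    have heq : (fun g => -((fun g => actE k a (E g) - E (actE k a g)) g))
        = fun g => E (actE k a g) - actE k a (E g) := by
      funext g; simp only; ring
    rw [← heq]
    exact h2

lemma adj_EtoA (n : ℕ) :
    ∀ (D : PowerSeries k → PowerSeries k) (E : Polynomial k → Polynomial k),
      (∀ f g, pairAE k (D f) g = pairAE k f (E g)) →
      IsDiffOpE k n E → IsDiffOpA k n D := by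
  induction n with
  | zero =>
    intro D E hadj hE a x
    apply left_ext
    intro g
    calc pairAE k (D (a * x)) g = pairAE k (a * x) (E g) := hadj _ _
      _ = pairAE k x (actE k a (E g)) := pair_mul a x (E g)
      _ = pairAE k x (E (actE k a g)) := by rw [← hE a g]
      _ = pairAE k (D x) (actE k a g) := (hadj _ _).symm
      _ = pairAE k (a * D x) g := (pair_mul a (D x) g).symm
  | succ n ih =>
    intro D E hadj hE a
    have h2 := isDiffOpE_neg n _ (hE a)
    have heq : (fun g => -((fun g => E (actE k a g) - actE k a (E g)) g))
        = fun g => actE k a (E g) - E (actE k a g) := by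
      funext g; simp only; ring
    rw [heq] at h2
    have hadj' : ∀ f g, pairAE k ((fun x => D (a * x) - a * D x) f) g
        = pairAE k f ((fun g => actE k a (E g) - E (actE k a g)) g) := by
      intro f g
      simp only
      rw [pair_sub_left, pair_sub_right, hadj, pair_mul a f (E g), pair_mul a (D f) g, hadj]
    exact ih _ _ hadj' h2

lemma exists_adjointE (D : PowerSeries k → PowerSeries k)
    (hadd : ∀ x y, D (x + y) = D x + D y)
    (hsmul : ∀ (c : k) x, D (c • x) = c • D x)
    (hcont : ∀ n : ℕ, ∃ m : ℕ, ∀ f : PowerSeries k,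
      (∀ i : ℕ, i < m → coeff i f = 0) → ∀ i : ℕ, i < n → coeff i (D f) = 0) :
    ∃ Ev : Polynomial k → Polynomial k, ∀ f g, pairAE k (D f) g = pairAE k f (Ev g) := by
  refine ⟨fun g => ∑ i ∈ Finset.range (hcont (g.natDegree + 1)).choose,
      Polynomial.monomial i (pairAE k (D ((X : PowerSeries k) ^ i)) g), ?_⟩
  intro f g
  simp only
  set m := (hcont (g.natDegree + 1)).choose with hmdef
  have hm := (hcont (g.natDegree + 1)).choose_spec
  rw [← hmdef] at hm
  have Dh : PowerSeries k →+ PowerSeries k := AddMonoidHom.mk' D hadd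
  set ft : PowerSeries k := ∑ i ∈ Finset.range m, (coeff i f) • (X : PowerSeries k) ^ i
    with hft
  have hco : ∀ j, j < m → coeff j ft = coeff j f := by
    intro j hj
    rw [hft, map_sum]
    rw [Finset.sum_congr rfl (fun i _ => by
      rw [map_smul, PowerSeries.coeff_X_pow, smul_eq_mul, mul_ite, mul_one, mul_zero]
      : ∀ i ∈ Finset.range m, coeff j ((coeff i f) • (X : PowerSeries k) ^ i)
          = if j = i then coeff i f else 0)]
    rw [Finset.sum_ite_eq (Finset.range m) j (fun i => coeff i f),
      if_pos (Finset.mem_range.mpr hj)]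
  have htail : ∀ i, i < m → coeff i (f - ft) = 0 := fun i hi => by
    rw [map_sub, hco i hi, sub_self]
  have h0 : pairAE k (D (f - ft)) g = 0 := by
    rw [pair_eq_range (D (f - ft)) g (Nat.lt_succ_self _)]
    exact Finset.sum_eq_zero fun i hi => by
      rw [hm (f - ft) htail i (Finset.mem_range.mp hi), mul_zero]
  have pairLg : ∀ (s : Finset ℕ) (F : ℕ → PowerSeries k),
      pairAE k (∑ i ∈ s, F i) g = ∑ i ∈ s, pairAE k (F i) g := fun s F =>
    map_sum (AddMonoidHom.mk' (fun f => pairAE k f g) (fun a b => pair_add_left a b g)) F s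
  have pairRf : ∀ (s : Finset ℕ) (G : ℕ → Polynomial k),
      pairAE k f (∑ i ∈ s, G i) = ∑ i ∈ s, pairAE k f (G i) := fun s G =>
    map_sum (AddMonoidHom.mk' (fun g => pairAE k f g) (fun a b => pair_add_right f a b)) G s
  have hDft : D ft = ∑ i ∈ Finset.range m, (coeff i f) • D ((X : PowerSeries k) ^ i) := by
    rw [hft, show (D (∑ i ∈ Finset.range m, (coeff i f) • (X : PowerSeries k) ^ i))
        = AddMonoidHom.mk' D hadd (∑ i ∈ Finset.range m, (coeff i f) • (X : PowerSeries k) ^ i)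
        from rfl, map_sum]
    exact Finset.sum_congr rfl fun i _ => hsmul _ _
  calc pairAE k (D f) g = pairAE k (D ((f - ft) + ft)) g := by rw [sub_add_cancel]
    _ = pairAE k (D (f - ft)) g + pairAE k (D ft) g := by rw [hadd, pair_add_left]
    _ = pairAE k (D ft) g := by rw [h0, zero_add]
    _ = ∑ i ∈ Finset.range m, coeff i f * pairAE k (D ((X : PowerSeries k) ^ i)) g := by
        rw [hDft, pairLg]
        exact Finset.sum_congr rfl fun i _ => pair_smul_left _ _ _
    _ = pairAE k f (∑ i ∈ Finset.range m,
          Polynomial.monomial i (pairAE k (D ((X : PowerSeries k) ^ i)) g)) := by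
        rw [pairRf]
        exact Finset.sum_congr rfl fun i _ => by rw [pair_monomial_right]; ring

lemma adjD (E : Polynomial k → Polynomial k)
    (hadd : ∀ g h, E (g + h) = E g + E h)
    (hsmul : ∀ (c : k) g, E (c • g) = c • E g) (f : PowerSeries k) (g : Polynomial k) :
    pairAE k (PowerSeries.mk fun i => pairAE k f (E (Polynomial.X ^ i))) g
      = pairAE k f (E g) := by
  have pairRf : ∀ (s : Finset ℕ) (G : ℕ → Polynomial k),
      pairAE k f (∑ i ∈ s, G i) = ∑ i ∈ s, pairAE k f (G i) := fun s G =>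
    map_sum (AddMonoidHom.mk' (fun g => pairAE k f g) (fun a b => pair_add_right f a b)) G s
  rw [pair_eq_range _ g (Nat.lt_succ_self _)]
  rw [Finset.sum_congr rfl (fun i _ => by
    rw [PowerSeries.coeff_mk, ← pair_smul_right]
    : ∀ i ∈ Finset.range (g.natDegree + 1),
        g.coeff i * coeff i (PowerSeries.mk fun i => pairAE k f (E (Polynomial.X ^ i)))
          = pairAE k f (g.coeff i • E (Polynomial.X ^ i)))]
  rw [← pairRf]
  congr 1
  have h2 : ∑ i ∈ Finset.range (g.natDegree + 1), g.coeff i • E (Polynomial.X ^ i)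
      = ∑ i ∈ Finset.range (g.natDegree + 1), E (g.coeff i • Polynomial.X ^ i) :=
    Finset.sum_congr rfl fun i _ => (hsmul _ _).symm
  have h3 : ∑ i ∈ Finset.range (g.natDegree + 1), E (g.coeff i • Polynomial.X ^ i)
      = E (∑ i ∈ Finset.range (g.natDegree + 1), g.coeff i • Polynomial.X ^ i) :=
    (map_sum (AddMonoidHom.mk' E hadd) (fun i => g.coeff i • Polynomial.X ^ i) _).symm
  rw [h2, h3]
  congr 1
  rw [Finset.sum_congr rfl (fun i _ => Polynomial.smul_X_eq_monomial)]
  exact (Polynomial.as_sum_range' g _ (Nat.lt_succ_self _)).symm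

end Stmt18Aux

/-- Let `k` be a field of characteristic `0`, `A = k[[t]]` and
`E = Hom^cont_k(A,k) ≅ k[t⁻¹]` the Matlis dual module.  Every continuous `k`-linear
differential operator `D : A → A` has a unique adjoint differential operator
`D^∨ : E → E` with `⟨D(a), φ⟩ = ⟨a, D^∨(φ)⟩`, and `D ↦ D^∨` is an anti-isomorphism of
filtered `k`-algebras `D(A)° ≅ Diff_{A/k}(E,E)`; concretely `t^∨` acts on `k[t⁻¹]` by
`t·t⁻ⁿ = t⁻ⁿ⁺¹`, `t·1 = 0` (i.e. as `divX` on the polynomial model). -/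
theorem stmt_18 (k : Type) [Field k] [CharZero k] :
    -- existence and uniqueness of the adjoint DO:
    (∀ D : PowerSeries k → PowerSeries k,
      ((∀ x y, D (x + y) = D x + D y) ∧ (∀ (c : k) x, D (c • x) = c • D x) ∧
        ContOpA k D ∧ ∃ n, IsDiffOpA k n D) →
      ∃! E : Polynomial k → Polynomial k,
        ((∀ g h, E (g + h) = E g + E h) ∧ (∀ (c : k) g, E (c • g) = c • E g) ∧
          ∃ n, IsDiffOpE k n E) ∧
        ∀ f g, pairAE k (D f) g = pairAE k f (E g)) ∧
    -- the adjoint preserves the order filtration: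
    (∀ (D : PowerSeries k → PowerSeries k) (E : Polynomial k → Polynomial k),
      (∀ f g, pairAE k (D f) g = pairAE k f (E g)) →
      ∀ n, IsDiffOpA k n D → IsDiffOpE k n E) ∧
    -- anti-multiplicativity: the adjoint of `D₁ ∘ D₂` is `D₂^∨ ∘ D₁^∨`:
    (∀ (D₁ D₂ : PowerSeries k → PowerSeries k) (E₁ E₂ : Polynomial k → Polynomial k),
      (∀ f g, pairAE k (D₁ f) g = pairAE k f (E₁ g)) →
      (∀ f g, pairAE k (D₂ f) g = pairAE k f (E₂ g)) →
      ∀ f g, pairAE k (D₁ (D₂ f)) g = pairAE k f (E₂ (E₁ g))) ∧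
    -- surjectivity: every DO on `E` is the adjoint of a continuous DO on `A`:
    (∀ E : Polynomial k → Polynomial k,
      ((∀ g h, E (g + h) = E g + E h) ∧ (∀ (c : k) g, E (c • g) = c • E g) ∧
        ∃ n, IsDiffOpE k n E) →
      ∃ D : PowerSeries k → PowerSeries k,
        ((∀ x y, D (x + y) = D x + D y) ∧ (∀ (c : k) x, D (c • x) = c • D x) ∧
          ContOpA k D ∧ ∃ n, IsDiffOpA k n D) ∧
        ∀ f g, pairAE k (D f) g = pairAE k f (E g)) ∧
    -- concretely, the adjoint of multiplication by `t` is `divX`: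
    (∀ (f : PowerSeries k) (g : Polynomial k),
      pairAE k (X * f) g = pairAE k f g.divX) := by

  classical
  refine ⟨?_, ?_, ?_, ?_, ?_⟩
  · -- existence and uniqueness
    rintro D ⟨hadd, hsmul, hcont, n, hdiff⟩
    obtain ⟨Ev, hEv⟩ := Stmt18Aux.exists_adjointE D hadd hsmul hcont
    refine ⟨Ev, ⟨⟨?_, ?_, ⟨n, Stmt18Aux.adj_AtoE n D Ev hEv hdiff⟩⟩, hEv⟩, ?_⟩
    · intro g h
      apply Stmt18Aux.right_ext
      intro f
      rw [← hEv, Stmt18Aux.pair_add_right, hEv, hEv, ← Stmt18Aux.pair_add_right]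
    · intro c g
      apply Stmt18Aux.right_ext
      intro f
      rw [← hEv, Stmt18Aux.pair_smul_right, hEv, ← Stmt18Aux.pair_smul_right]
    · rintro E' ⟨_, hE'⟩
      funext g
      apply Stmt18Aux.right_ext
      intro f
      rw [← hE', hEv]
  · -- filtration
    exact fun D E hadj n hD => Stmt18Aux.adj_AtoE n D E hadj hD
  · -- anti-multiplicativity
    intro D₁ D₂ E₁ E₂ h1 h2 f g
    rw [h1, h2]
  · -- surjectivity
    rintro E ⟨hadd, hsmul, n, hdiff⟩
    set D : PowerSeries k → PowerSeries k :=
      fun f => PowerSeries.mk fun i => pairAE k f (E (Polynomial.X ^ i)) with hD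
    have hadj : ∀ f g, pairAE k (D f) g = pairAE k f (E g) := fun f g =>
      Stmt18Aux.adjD E hadd hsmul f g
    refine ⟨D, ⟨?_, ?_, ?_, ⟨n, Stmt18Aux.adj_EtoA n D E hadj hdiff⟩⟩, hadj⟩
    · intro x y
      ext i
      simp only [hD, PowerSeries.coeff_mk, map_add]
      rw [Stmt18Aux.pair_add_left]
    · intro c x
      ext i
      simp only [hD, PowerSeries.coeff_mk, map_smul, smul_eq_mul]
      rw [Stmt18Aux.pair_smul_left]
    · intro n'
      refine ⟨(Finset.range n').sup (fun i => (E (Polynomial.X ^ i)).natDegree) + 1, ?_⟩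
      intro f hf i hi
      have hc : coeff i (D f) = pairAE k f (E (Polynomial.X ^ i)) := by
        rw [hD]
        exact PowerSeries.coeff_mk _ _
      rw [hc, Stmt18Aux.pair_eq_range f _ (Nat.lt_succ_of_le
        (Finset.le_sup (f := fun i => (E (Polynomial.X ^ i)).natDegree)
          (Finset.mem_range.mpr hi)))]
      exact Finset.sum_eq_zero fun j hj => by
        rw [hf j (Finset.mem_range.mp hj), mul_zero]
  · -- adjoint of multiplication by X is divX
    intro f g
    rw [Stmt18Aux.pair_mul, Stmt18Aux.actE_X]
end
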